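/- arXiv:1104.5489 — 5 statements merged into one kernel-verified Lean document; each statement's English description precedes it below -/
import Mathlib

section
/- For an element y of the coweight-type lattice Y with (y,α) ≥ 0 for all positive roots α, the length of the translation t_y in the extended affine Weyl group, defined as l(t_y) = #(R̂⁺ ∩ t_y⁻¹ R̂⁻), equals 2(ρ, y) where ρ is the half-sum of positive roots; more generally, for arbitrary y ∈ Y, l(t_y) = Σ_{α ∈ R⁺} |(y,α)|. -/
open scoped RealInnerProductSpace

/-!
A translation `t_y` only shifts the level `m` of an affine root `α + mc` by `(y, α)`, so its
inversions lying over a fixed root `α` form an interval of levels of length `max (y, α) 0`: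
`[0, (y, α))` when `α > 0` and `[1, (y, α)]` when `α < 0`. Pairing `α` with `-α` turns the count
into `∑_{α > 0} (max (y, α) 0 + max (-(y, α)) 0) = ∑_{α > 0} |(y, α)|`.
-/

open Finset

/-- The levels `m` for which `α + mc` is an inversion of `t_y`, where `P` says that `α` is
positive and `k = (y, α)`. -/
noncomputable def inversionLevels (P : Prop) [Decidable P] (k : ℤ) : Finset ℤ :=
  if P then Ico 0 k else Ico 1 (k + 1)

theorem mem_inversionLevels {P : Prop} [Decidable P] {k m : ℤ} :
    m ∈ inversionLevels P k ↔
      (0 < m ∨ (m = 0 ∧ P)) ∧ (m - k < 0 ∨ (m - k = 0 ∧ ¬P)) := by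
  by_cases hP : P <;> simp [inversionLevels, hP] <;> omega

theorem card_inversionLevels (P : Prop) [Decidable P] (k : ℤ) :
    (inversionLevels P k).card = k.toNat := by
  unfold inversionLevels
  split_ifs <;> simp only [Int.card_Ico, add_sub_cancel_right, sub_zero]

theorem Finset.setOf_fst_mem_snd_mem_eq_coe_map_sigma {ι β : Type*} (s : Finset ι)
    (t : ι → Finset β) :
    {p : ι × β | p.1 ∈ s ∧ p.2 ∈ t p.1} =
      ↑((s.sigma t).map (Equiv.sigmaEquivProd ι β).toEmbedding) := by
  ext ⟨i, b⟩
  simp [Equiv.sigmaEquivProd]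

theorem Finset.sum_eq_sum_add_neg {G M : Type*} [AddGroup G] [AddCommMonoid M] [DecidableEq G]
    {R Rplus : Finset G} (hR : ∀ α, α ∈ R ↔ (α ∈ Rplus ∨ -α ∈ Rplus))
    (hdisj : ∀ α ∈ Rplus, -α ∉ Rplus) (f : G → M) :
    ∑ α ∈ R, f α = ∑ α ∈ Rplus, (f α + f (-α)) := by
  have hsplit : R = Rplus ∪ Rplus.map (Equiv.neg G).toEmbedding := by
    ext α
    simp [hR α]
  have hdisjoint : Disjoint Rplus (Rplus.map (Equiv.neg G).toEmbedding) := by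
    simp only [disjoint_left, mem_map_equiv, Equiv.neg_symm, Equiv.neg_apply]
    exact hdisj
  rw [hsplit, sum_union hdisjoint, sum_map, sum_add_distrib]
  rfl

theorem stmt4_general {V : Type*} [NormedAddCommGroup V] [InnerProductSpace ℝ V]
    (R Rplus : Finset V)
    (hR : ∀ α : V, α ∈ R ↔ (α ∈ Rplus ∨ -α ∈ Rplus))
    (hdisj : ∀ α ∈ Rplus, -α ∉ Rplus)
    (y : V) (zmap : V → ℤ) (hz : ∀ α ∈ R, (zmap α : ℝ) = ⟪y, α⟫)
    (S : Set (V × ℤ))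
    (hS : S = {p : V × ℤ | p.1 ∈ R ∧
        (0 < p.2 ∨ (p.2 = 0 ∧ p.1 ∈ Rplus)) ∧
        (p.2 - zmap p.1 < 0 ∨ (p.2 - zmap p.1 = 0 ∧ p.1 ∉ Rplus))}) :
    S.Finite ∧
    ((Nat.card S : ℝ) = ∑ α ∈ Rplus, |⟪y, α⟫|) ∧
    ((∀ α ∈ Rplus, 0 ≤ ⟪y, α⟫) →
      (Nat.card S : ℝ) = 2 * ⟪(2 : ℝ)⁻¹ • ∑ α ∈ Rplus, α, y⟫) := by
  classical
  have hSF : S = ↑((R.sigma fun α => inversionLevels (α ∈ Rplus) (zmap α)).map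
      (Equiv.sigmaEquivProd V ℤ).toEmbedding) := by
    rw [← setOf_fst_mem_snd_mem_eq_coe_map_sigma, hS]
    simp only [mem_inversionLevels]
  have hzabs (α : V) (hα : α ∈ Rplus) :
      ((zmap α).toNat + (zmap (-α)).toNat : ℝ) = |⟪y, α⟫| := by
    have hαR : α ∈ R := (hR α).2 (Or.inl hα)
    have hneg : zmap (-α) = -zmap α := by
      have h := hz (-α) ((hR _).2 (Or.inr (by rwa [neg_neg])))
      rw [inner_neg_right, ← hz α hαR] at h
      exact_mod_cast h
    rw [hneg, ← Nat.cast_add, Int.toNat_add_toNat_neg_eq_natAbs, Nat.cast_natAbs, Int.cast_abs,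
      hz α hαR]
  have hcard : (Nat.card S : ℝ) = ∑ α ∈ Rplus, |⟪y, α⟫| := by
    rw [hSF, Nat.card_coe_set_eq, Set.ncard_coe_finset, card_map, card_sigma,
      sum_eq_sum_add_neg hR hdisj]
    push_cast [card_inversionLevels]
    exact sum_congr rfl hzabs
  refine ⟨hSF ▸ finite_toSet _, hcard, fun hnonneg => ?_⟩
  rw [hcard, real_inner_smul_left, sum_inner, mul_inv_cancel_left₀ two_ne_zero]
  exact sum_congr rfl fun α hα => (abs_of_nonneg (hnonneg α hα)).trans (real_inner_comm α y)

/-- for y in a lattice with (y,α) ∈ ℤ for all roots α, the length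
l(t_y) = #(R̂⁺ ∩ t_y⁻¹R̂⁻) equals Σ_{α∈R⁺} |(y,α)|, and if (y,α) ≥ 0 for all α ∈ R⁺
it equals 2(ρ,y) where ρ = (1/2)Σ_{α∈R⁺} α. -/
theorem stmt4 {V : Type*} [NormedAddCommGroup V] [InnerProductSpace ℝ V]
    (R Rplus : Finset V)
    (hR : ∀ α : V, α ∈ R ↔ (α ∈ Rplus ∨ -α ∈ Rplus))
    (hdisj : ∀ α ∈ Rplus, -α ∉ Rplus)
    (h0 : (0 : V) ∉ R)
    (y : V) (zmap : V → ℤ) (hz : ∀ α ∈ R, (zmap α : ℝ) = ⟪y, α⟫)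
    (S : Set (V × ℤ))
    (hS : S = {p : V × ℤ | p.1 ∈ R ∧
        (0 < p.2 ∨ (p.2 = 0 ∧ p.1 ∈ Rplus)) ∧
        (p.2 - zmap p.1 < 0 ∨ (p.2 - zmap p.1 = 0 ∧ p.1 ∉ Rplus))}) :
    S.Finite ∧
    ((Nat.card S : ℝ) = ∑ α ∈ Rplus, |⟪y, α⟫|) ∧
    ((∀ α ∈ Rplus, 0 ≤ ⟪y, α⟫) →
      (Nat.card S : ℝ) = 2 * ⟪(2 : ℝ)⁻¹ • ∑ α ∈ Rplus, α, y⟫) :=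
  stmt4_general R Rplus hR hdisj y zmap hz S hS
end

section
/- If a lattice Y in V satisfies (Y, P) ⊆ ℤ, where P is the weight lattice of R, then l(t_y) is even for every y ∈ Y. -/
/-!
The Weyl vector `ρ = ½ ∑_{α > 0} α` is a weight. Indeed, for a root `β`, sending `α > 0` to
whichever of `±s_β α` is positive is an involution of `R⁺` that only changes the sign of
`⟨α, β∨⟩`; its fixed points satisfy `⟨α, β∨⟩ = 0`, or `α` is proportional to `β`, in which case
`⟨α, β∨⟩ = ±2` because `R` is reduced and crystallographic. So `∑_{α > 0} ⟨α, β∨⟩` is even.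
Hence `∑_{α > 0} (y, α) = 2 (y, ρ)` is even, and as every `(y, α)` is an integer (roots are
weights), so is `∑_{α > 0} |(y, α)|`.
-/

open scoped RealInnerProductSpace
open Finset

theorem Finset.sum_mem_of_involution {ι G : Type*} [AddCommGroup G] {H : AddSubgroup G}
    {s : Finset ι} {f : ι → G} (g : ∀ a ∈ s, ι) (hg₁ : ∀ a ha, f a + f (g a ha) ∈ H)
    (hg₃ : ∀ a ha, f a ∉ H → g a ha ≠ a) (g_mem : ∀ a ha, g a ha ∈ s)
    (hg₄ : ∀ a ha, g (g a ha) (g_mem a ha) = a) :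
    ∑ x ∈ s, f x ∈ H := by
  rw [← QuotientAddGroup.eq_zero_iff, QuotientAddGroup.mk_sum]
  refine sum_involution g (fun a ha => ?_) (fun a ha hne => hg₃ a ha ?_) g_mem hg₄
  · rw [← QuotientAddGroup.mk_add, QuotientAddGroup.eq_zero_iff]; exact hg₁ a ha
  · rwa [Ne, QuotientAddGroup.eq_zero_iff] at hne

theorem intCast_mem_zmultiples_two {z : ℤ} (hz : Even z) :
    (z : ℝ) ∈ AddSubgroup.zmultiples (2 : ℝ) := by
  obtain ⟨k, rfl⟩ := hz
  exact AddSubgroup.mem_zmultiples_iff.mpr ⟨k, by rw [zsmul_eq_mul]; push_cast; ring⟩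

theorem sum_abs_mem_zmultiples_two {ι : Type*} {s : Finset ι} {f : ι → ℝ}
    (hint : ∀ i ∈ s, ∃ z : ℤ, f i = z)
    (hsum : ∑ i ∈ s, f i ∈ AddSubgroup.zmultiples (2 : ℝ)) :
    ∑ i ∈ s, |f i| ∈ AddSubgroup.zmultiples (2 : ℝ) := by
  have hdiff : ∀ i ∈ s, |f i| - f i ∈ AddSubgroup.zmultiples (2 : ℝ) := by
    intro i hi
    obtain ⟨z, hz⟩ := hint i hi
    rcases abs_choice (f i) with h | h
    · simp [h]
    · refine AddSubgroup.mem_zmultiples_iff.mpr ⟨-z, ?_⟩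
      rw [h, hz, zsmul_eq_mul]
      push_cast
      ring
  have := add_mem hsum (AddSubgroup.sum_mem _ hdiff)
  rwa [← sum_add_distrib, sum_congr rfl fun i _ => add_sub_cancel (f i) |f i|] at this

section PositiveRep

variable {M : Type*} [InvolutiveNeg M]

open scoped Classical in
noncomputable def positiveRep (Rplus : Finset M) (x : M) : M := if x ∈ Rplus then x else -x

theorem positiveRep_eq_or_eq_neg (Rplus : Finset M) (x : M) :
    positiveRep Rplus x = x ∨ positiveRep Rplus x = -x := by
  unfold positiveRep
  split_ifs <;> simp

theorem positiveRep_mem {Rplus : Finset M} {x : M} (hx : x ∈ Rplus ∨ -x ∈ Rplus) :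
    positiveRep Rplus x ∈ Rplus := by
  unfold positiveRep
  split_ifs with h
  · exact h
  · exact hx.resolve_left h

theorem positiveRep_of_mem {Rplus : Finset M} {x : M} (hx : x ∈ Rplus) :
    positiveRep Rplus x = x := by
  simp [positiveRep, hx]

theorem positiveRep_neg {Rplus : Finset M} {x : M} (hx : -x ∉ Rplus) :
    positiveRep Rplus (-x) = x := by
  simp [positiveRep, hx]

end PositiveRep

noncomputable section

variable {V : Type*} [NormedAddCommGroup V] [InnerProductSpace ℝ V]

/-- `corootPairing x α` is `⟨x, α∨⟩` for the coroot `α∨ = 2α / (α, α)`. -/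
def corootPairing (x α : V) : ℝ := 2 * ⟪x, α⟫ / ⟪α, α⟫

def rootReflection (α x : V) : V := x - corootPairing x α • α

theorem corootPairing_sum_left {ι : Type*} (s : Finset ι) (x : ι → V) (α : V) :
    corootPairing (∑ i ∈ s, x i) α = ∑ i ∈ s, corootPairing (x i) α := by
  simp only [corootPairing, sum_inner, mul_sum, sum_div]

theorem corootPairing_smul_left (c : ℝ) (x α : V) :
    corootPairing (c • x) α = c * corootPairing x α := by
  simp only [corootPairing, real_inner_smul_left]; ring

theorem corootPairing_neg_left (x α : V) : corootPairing (-x) α = -corootPairing x α := by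
  simp only [corootPairing, inner_neg_left]; ring

theorem corootPairing_rootReflection (α x : V) :
    corootPairing (rootReflection α x) α = -corootPairing x α := by
  rcases eq_or_ne α 0 with rfl | hα
  · simp [corootPairing]
  have : ⟪α, α⟫ ≠ 0 := inner_self_ne_zero.mpr hα
  simp only [rootReflection, corootPairing, inner_sub_left, real_inner_smul_left]
  field_simp
  ring

theorem rootReflection_rootReflection (α x : V) : rootReflection α (rootReflection α x) = x := by
  rw [rootReflection, corootPairing_rootReflection, rootReflection, neg_smul, sub_neg_eq_add,
    sub_add_cancel]

theorem rootReflection_neg (α x : V) : rootReflection α (-x) = -rootReflection α x := by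
  rw [rootReflection, rootReflection, corootPairing_neg_left, neg_smul, neg_sub]; abel

theorem corootPairing_eq_zero_of_rootReflection_eq_self {α x : V} (hα : α ≠ 0)
    (h : rootReflection α x = x) : corootPairing x α = 0 := by
  rw [rootReflection, sub_eq_self, smul_eq_zero] at h
  exact h.resolve_right hα

theorem two_smul_eq_of_rootReflection_eq_neg {α x : V} (h : rootReflection α x = -x) :
    (2 : ℝ) • x = corootPairing x α • α := by
  rw [two_smul, ← sub_neg_eq_add, ← h, rootReflection, sub_sub_cancel]

theorem corootPairing_mul_eq_four_of_two_smul_eq {α β : V} {c : ℝ} (hβ : β ≠ 0) (hc : c ≠ 0)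
    (h : (2 : ℝ) • α = c • β) : corootPairing β α * c = 4 := by
  have hα : α = (c / 2) • β := by
    rw [div_eq_inv_mul, mul_smul, ← h, smul_smul]; norm_num
  have : ⟪β, β⟫ ≠ 0 := inner_self_ne_zero.mpr hβ
  simp only [hα, corootPairing, real_inner_smul_left, real_inner_smul_right]
  field_simp
  ring

theorem even_of_two_smul_eq_intCast_smul {R : Finset V} (h0 : (0 : V) ∉ R)
    (hneg : ∀ α ∈ R, -α ∈ R) (hred : ∀ α ∈ R, (2 : ℝ) • α ∉ R)
    (hcrys : ∀ α ∈ R, ∀ β ∈ R, ∃ z : ℤ, corootPairing α β = z)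
    {α β : V} (hα : α ∈ R) (hβ : β ∈ R) {c : ℤ} (h : (2 : ℝ) • α = (c : ℝ) • β) : Even c := by
  have hc : c ≠ 0 := by
    rintro rfl
    rw [Int.cast_zero, zero_smul, smul_eq_zero] at h
    exact h0 (h.resolve_left two_ne_zero ▸ hα)
  obtain ⟨z, hz⟩ := hcrys β hβ α hα
  have h4 : z * c = 4 := by
    have := corootPairing_mul_eq_four_of_two_smul_eq (ne_of_mem_of_not_mem hβ h0)
      (Int.cast_ne_zero.mpr hc) h
    rw [hz] at this
    exact_mod_cast this
  -- `⟨β, α∨⟩ = 4 / c` is an integer, so an odd `c` is `±1`, i.e. `β = ±2α`.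
  by_contra hodd
  have hc1 : c = 1 ∨ c = -1 := by
    rw [Int.not_even_iff] at hodd
    have hle : c ≤ 4 := Int.le_of_dvd four_pos ⟨z, by rw [← h4, mul_comm]⟩
    have hge : -4 ≤ c := by
      have := Int.le_of_dvd four_pos (neg_dvd.mpr ⟨z, by rw [← h4, mul_comm]⟩)
      omega
    interval_cases c <;> omega
  rcases hc1 with rfl | rfl
  · exact hred α hα (by rwa [h, Int.cast_one, one_smul])
  · exact hred α hα (by rw [h, Int.cast_neg, Int.cast_one, neg_one_smul]; exact hneg β hβ)

theorem sum_corootPairing_mem_zmultiples_two {R Rplus : Finset V}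
    (hR : ∀ α : V, α ∈ R ↔ (α ∈ Rplus ∨ -α ∈ Rplus)) (hdisj : ∀ α ∈ Rplus, -α ∉ Rplus)
    (h0 : (0 : V) ∉ R) (hrefl : ∀ α ∈ R, ∀ β ∈ R, rootReflection α β ∈ R)
    (hred : ∀ α ∈ R, (2 : ℝ) • α ∉ R)
    (hcrys : ∀ α ∈ R, ∀ β ∈ R, ∃ z : ℤ, corootPairing α β = z) {β : V} (hβ : β ∈ R) :
    ∑ α ∈ Rplus, corootPairing α β ∈ AddSubgroup.zmultiples (2 : ℝ) := by
  have hplus : ∀ α ∈ Rplus, α ∈ R := fun α hα => (hR α).2 (Or.inl hα)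
  have hneg : ∀ α ∈ R, -α ∈ R := fun α hα => (hR _).2 (by rw [neg_neg]; exact ((hR α).1 hα).symm)
  have hpair : ∀ α ∈ Rplus, corootPairing α β +
      corootPairing (positiveRep Rplus (rootReflection β α)) β ∈
        AddSubgroup.zmultiples (2 : ℝ) := by
    intro α hα
    obtain ⟨z, hz⟩ := hcrys α (hplus α hα) β hβ
    rcases positiveRep_eq_or_eq_neg Rplus (rootReflection β α) with h | h <;> rw [h]
    · rw [corootPairing_rootReflection, add_neg_cancel]
      exact zero_mem _
    · rw [corootPairing_neg_left, corootPairing_rootReflection, neg_neg, hz, ← Int.cast_add]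
      exact intCast_mem_zmultiples_two (Even.add_self z)
  have hfixed : ∀ α ∈ Rplus, positiveRep Rplus (rootReflection β α) = α →
      corootPairing α β ∈ AddSubgroup.zmultiples (2 : ℝ) := by
    intro α hα hfix
    rcases positiveRep_eq_or_eq_neg Rplus (rootReflection β α) with h | h <;> rw [h] at hfix
    · rw [corootPairing_eq_zero_of_rootReflection_eq_self (ne_of_mem_of_not_mem hβ h0) hfix]
      exact zero_mem _
    · obtain ⟨z, hz⟩ := hcrys α (hplus α hα) β hβ
      have h2 := two_smul_eq_of_rootReflection_eq_neg (neg_eq_iff_eq_neg.mp hfix)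
      rw [hz] at h2 ⊢
      exact intCast_mem_zmultiples_two
        (even_of_two_smul_eq_intCast_smul h0 hneg hred hcrys (hplus α hα) hβ h2)
  have hmaps : ∀ α ∈ Rplus, positiveRep Rplus (rootReflection β α) ∈ Rplus :=
    fun α hα => positiveRep_mem ((hR _).1 (hrefl β hβ α (hplus α hα)))
  have hinv : ∀ α ∈ Rplus,
      positiveRep Rplus (rootReflection β (positiveRep Rplus (rootReflection β α))) = α := by
    intro α hα
    rcases positiveRep_eq_or_eq_neg Rplus (rootReflection β α) with h | h <;> rw [h]
    · rw [rootReflection_rootReflection, positiveRep_of_mem hα]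
    · rw [rootReflection_neg, rootReflection_rootReflection, positiveRep_neg (hdisj α hα)]
  exact Finset.sum_mem_of_involution (fun α _ => positiveRep Rplus (rootReflection β α)) hpair
    (fun α hα hodd hfix => hodd (hfixed α hα hfix)) hmaps hinv

def weylVector (Rplus : Finset V) : V := (2 : ℝ)⁻¹ • ∑ α ∈ Rplus, α

theorem inner_weylVector (y : V) (Rplus : Finset V) :
    ⟪y, weylVector Rplus⟫ = 2⁻¹ * ∑ α ∈ Rplus, ⟪y, α⟫ := by
  rw [weylVector, real_inner_smul_right, inner_sum]

theorem exists_intCast_corootPairing_weylVector {R Rplus : Finset V}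
    (hR : ∀ α : V, α ∈ R ↔ (α ∈ Rplus ∨ -α ∈ Rplus)) (hdisj : ∀ α ∈ Rplus, -α ∉ Rplus)
    (h0 : (0 : V) ∉ R) (hrefl : ∀ α ∈ R, ∀ β ∈ R, rootReflection α β ∈ R)
    (hred : ∀ α ∈ R, (2 : ℝ) • α ∉ R)
    (hcrys : ∀ α ∈ R, ∀ β ∈ R, ∃ z : ℤ, corootPairing α β = z) :
    ∀ β ∈ R, ∃ z : ℤ, corootPairing (weylVector Rplus) β = z := by
  intro β hβ
  obtain ⟨k, hk⟩ := AddSubgroup.mem_zmultiples_iff.mp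
    (sum_corootPairing_mem_zmultiples_two hR hdisj h0 hrefl hred hcrys hβ)
  refine ⟨k, ?_⟩
  rw [weylVector, corootPairing_smul_left, corootPairing_sum_left, ← hk, zsmul_eq_mul]
  ring

end

theorem stmt5_general {V : Type*} [NormedAddCommGroup V] [InnerProductSpace ℝ V]
    (R Rplus : Finset V)
    (hR : ∀ α : V, α ∈ R ↔ (α ∈ Rplus ∨ -α ∈ Rplus))
    (hdisj : ∀ α ∈ Rplus, -α ∉ Rplus)
    (h0 : (0 : V) ∉ R)
    (hrefl : ∀ α ∈ R, ∀ β ∈ R, β - ((2 * ⟪β, α⟫ / ⟪α, α⟫) • α) ∈ R)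
    (hred : ∀ α ∈ R, (2 : ℝ) • α ∉ R)
    (hcrys : ∀ α ∈ R, ∀ β ∈ R, ∃ z : ℤ, 2 * ⟪α, β⟫ / ⟪β, β⟫ = (z : ℝ))
    (y : V)
    (hy : ∀ p : V, (∀ α ∈ R, ∃ z : ℤ, 2 * ⟪p, α⟫ / ⟪α, α⟫ = (z : ℝ)) →
      ∃ z : ℤ, ⟪y, p⟫ = (z : ℝ)) :
    ∃ z : ℤ, ∑ α ∈ Rplus, |⟪y, α⟫| = 2 * (z : ℝ) := by
  obtain ⟨n, hn⟩ := hy _ (exists_intCast_corootPairing_weylVector hR hdisj h0 hrefl hred hcrys)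
  have hsum : ∑ α ∈ Rplus, ⟪y, α⟫ ∈ AddSubgroup.zmultiples (2 : ℝ) := by
    refine AddSubgroup.mem_zmultiples_iff.mpr ⟨n, ?_⟩
    rw [zsmul_eq_mul, ← hn, inner_weylVector]
    ring
  have hint : ∀ α ∈ Rplus, ∃ z : ℤ, ⟪y, α⟫ = z :=
    fun α hα => hy α (hcrys α ((hR α).2 (Or.inl hα)))
  obtain ⟨z, hz⟩ := AddSubgroup.mem_zmultiples_iff.mp (sum_abs_mem_zmultiples_two hint hsum)
  exact ⟨z, by rw [← hz, zsmul_eq_mul, mul_comm]⟩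

/-- if the lattice element y pairs integrally with the weight lattice
P = {p : (p, α∨) ∈ ℤ for all roots α}, then l(t_y) = Σ_{α∈R⁺} |(y,α)| is even.
R is a finite reduced crystallographic root system, closed under its reflections,
with positive system R⁺ cut out by a generic linear functional (·,f). -/
theorem stmt5 {V : Type*} [NormedAddCommGroup V] [InnerProductSpace ℝ V]
    (R Rplus : Finset V)
    (hR : ∀ α : V, α ∈ R ↔ (α ∈ Rplus ∨ -α ∈ Rplus))
    (hdisj : ∀ α ∈ Rplus, -α ∉ Rplus)
    (h0 : (0 : V) ∉ R)
    (hrefl : ∀ α ∈ R, ∀ β ∈ R, β - ((2 * ⟪β, α⟫ / ⟪α, α⟫) • α) ∈ R)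
    (hred : ∀ α ∈ R, (2 : ℝ) • α ∉ R)
    (hcrys : ∀ α ∈ R, ∀ β ∈ R, ∃ z : ℤ, 2 * ⟪α, β⟫ / ⟪β, β⟫ = (z : ℝ))
    (f : V) (hf : ∀ α ∈ R, (α ∈ Rplus ↔ 0 < ⟪f, α⟫))
    (y : V)
    (hy : ∀ p : V, (∀ α ∈ R, ∃ z : ℤ, 2 * ⟪p, α⟫ / ⟪α, α⟫ = (z : ℝ)) →
      ∃ z : ℤ, ⟪y, p⟫ = (z : ℝ)) :
    ∃ z : ℤ, ∑ α ∈ Rplus, |⟪y, α⟫| = 2 * (z : ℝ) :=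
  stmt5_general R Rplus hR hdisj h0 hrefl hred hcrys y hy
end

section
/- The only W ⋉ Y_0-invariant elements of the polynomial algebra S(Z ⊕ ℂc), where Y_0 is a full lattice in the real form of Z and t_y acts on Z ⊕ ℂc by t_y(z + ηc) = z + (η - (z,y))c, are the polynomials in c alone: S(Z ⊕ ℂc)^{Y_0} = ℂ[c]. -/
/-! The action of `t_y` is polynomial in `y`: on the slice `c = t`, invariance under `t_y` says
that `u ↦ p(u, t)` has period `t • y`. The periods of a polynomial function form a subspace, since
periodicity along a line under `ℤ` forces constancy along it (a nonzero one-variable polynomial has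
finitely many roots). A full lattice spans `ℂⁿ` over `ℂ`, so for `t ≠ 0` the slice is constant:
`p(u, t) = p(0, t)`. Polynomials agreeing wherever no coordinate vanishes are equal, hence
`p = p(0, c) ∈ ℂ[c]`. -/

open MvPolynomial

/- The symmetric algebra S(Z ⊕ ℂc), with Z the complexification of V′ ≅ ℝⁿ, is modeled
as the polynomial algebra ℂ[z₁,…,zₙ,c] = MvPolynomial (Fin n ⊕ Unit) ℂ, the variable
X (inl i) corresponding to the i-th standard (orthonormal) basis vector eᵢ of V′ and
X (inr ()) to c.  The translation t_y acts by t_y(z + ηc) = z + (η - (z,y))c, i.e. on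
generators by zᵢ ↦ zᵢ - (eᵢ,y)·c = zᵢ - yᵢ·c and c ↦ c. -/

/-- The algebra automorphism of S(Z ⊕ ℂc) induced by the translation t_y. -/
noncomputable def transAction (n : ℕ) (y : Fin n → ℝ) :
    MvPolynomial (Fin n ⊕ Unit) ℂ →ₐ[ℂ] MvPolynomial (Fin n ⊕ Unit) ℂ :=
  aeval (fun j => match j with
    | Sum.inl i => X (Sum.inl i) - C ((y i : ℝ) : ℂ) * X (Sum.inr ())
    | Sum.inr _ => X (Sum.inr ()))

namespace MvPolynomial

variable {σ τ R : Type*} [CommRing R]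

theorem eval_aeval (v : σ → R) (g : τ → MvPolynomial σ R) (p : MvPolynomial τ R) :
    eval v (aeval g p) = eval (fun j => eval v (g j)) p := by
  simpa [coe_aeval_eq_eval] using aeval_bind₁ v g p

theorem polynomial_eval_aeval (s : R) (g : σ → Polynomial R) (p : MvPolynomial σ R) :
    (aeval g p).eval s = eval (fun j => (g j).eval s) p := by
  rw [← Polynomial.coe_aeval_eq_eval, comp_aeval_apply, ← coe_aeval_eq_eval]
  rfl

theorem eval_polynomial_aeval (v : σ → R) (x : MvPolynomial σ R) (P : Polynomial R) :
    eval v (Polynomial.aeval x P) = P.eval (eval v x) := by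
  simpa [coe_aeval_eq_eval] using (Polynomial.aeval_algHom_apply (aeval v) x P).symm

theorem eval_add_smul_eq_of_forall_int [IsDomain R] [CharZero R] (p : MvPolynomial σ R)
    (v w : σ → R) (h : ∀ k : ℤ, eval (v + k • w) p = eval v p) (s : R) :
    eval (v + s • w) p = eval v p := by
  set P : Polynomial R :=
    aeval (fun i => Polynomial.C (v i) + Polynomial.C (w i) * Polynomial.X) p
  have hP : ∀ s, P.eval s = eval (v + s • w) p := fun s => by
    rw [polynomial_eval_aeval]
    congr 2
    funext i
    simp only [Polynomial.eval_add, Polynomial.eval_mul, Polynomial.eval_C, Polynomial.eval_X,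
      Pi.add_apply, Pi.smul_apply, smul_eq_mul, mul_comm]
  have hconst : P = Polynomial.C (eval v p) :=
    Polynomial.eq_of_infinite_eval_eq _ _ <| Set.infinite_of_injective_forall_mem
      (f := fun k : ℤ => (k : R)) Int.cast_injective fun k => by
        rw [Set.mem_ofPred_eq, hP, Polynomial.eval_C, Int.cast_smul_eq_zsmul]
        exact h k
  rw [← hP, hconst, Polynomial.eval_C]

def periods [IsDomain R] [CharZero R] (p : MvPolynomial σ R) : Submodule R (σ → R) where
  carrier := {w | Function.Periodic (fun v => eval v p) w}
  add_mem' ha hb := Function.Periodic.add_period (f := fun v => eval v p) ha hb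
  zero_mem' v := by simp only [add_zero]
  smul_mem' s w hw v := eval_add_smul_eq_of_forall_int p v w
    (fun k => Function.Periodic.zsmul (f := fun v => eval v p) hw k v) s

theorem mem_periods [IsDomain R] [CharZero R] {p : MvPolynomial σ R} {w : σ → R} :
    w ∈ p.periods ↔ ∀ v, eval (v + w) p = eval v p := by
  rfl

noncomputable def sliceAt (t : R) (p : MvPolynomial (σ ⊕ Unit) R) : MvPolynomial σ R :=
  aeval (Sum.elim X fun _ => C t) p

theorem eval_sliceAt (t : R) (p : MvPolynomial (σ ⊕ Unit) R) (u : σ → R) :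
    eval u (sliceAt t p) = eval (Sum.elim u fun _ => t) p := by
  rw [sliceAt, eval_aeval]
  congr 2
  funext j
  cases j <;> simp

theorem eval_eq_eval_sliceAt (v : σ ⊕ Unit → R) (p : MvPolynomial (σ ⊕ Unit) R) :
    eval v p = eval (v ∘ Sum.inl) (sliceAt (v (Sum.inr ())) p) := by
  rw [eval_sliceAt]
  congr 2
  funext j
  rcases j with i | ⟨⟩ <;> rfl

end MvPolynomial

open MvPolynomial

theorem span_range_ofReal_basis_eq_top {ι κ : Type*} (b : Module.Basis ι ℝ (κ → ℝ)) :
    Submodule.span ℂ (Set.range fun j i => (b j i : ℂ)) = ⊤ := by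
  set S := Submodule.span ℂ (Set.range fun j i => (b j i : ℂ))
  set L : (κ → ℝ) →ₗ[ℝ] (κ → ℂ) := Complex.ofRealCLM.toLinearMap.compLeft κ
  have hreal : ∀ r, L r ∈ S := fun r => by
    have : Submodule.map L (Submodule.span ℝ (Set.range b)) ≤ S.restrictScalars ℝ := by
      rw [Submodule.map_span, ← Set.range_comp]
      exact Submodule.span_le_restrictScalars ℝ ℂ _
    exact this (Submodule.mem_map_of_mem (b.mem_span r))
  refine eq_top_iff.2 fun x _ => ?_
  have hx : x = L (fun i => (x i).re) + Complex.I • L (fun i => (x i).im) := by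
    funext i
    simp only [L, Pi.add_apply, Pi.smul_apply, LinearMap.compLeft_apply, Function.comp_apply,
      ContinuousLinearMap.coe_coe, Complex.ofRealCLM_apply, smul_eq_mul]
    rw [mul_comm]
    exact (Complex.re_add_im _).symm
  rw [hx]
  exact add_mem (hreal _) (S.smul_mem _ (hreal _))

theorem eval_sliceAt_transAction {n : ℕ} (y : Fin n → ℝ) (t : ℂ)
    (p : MvPolynomial (Fin n ⊕ Unit) ℂ) (u : Fin n → ℂ) :
    eval u (sliceAt t (transAction n y p)) = eval (u - t • fun i => (y i : ℂ)) (sliceAt t p) := by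
  rw [eval_sliceAt, eval_sliceAt, transAction, eval_aeval]
  congr 2
  funext j
  rcases j with i | _ <;> simp [mul_comm]

theorem ofReal_mem_periods_sliceAt {n : ℕ} {y : Fin n → ℝ} {p : MvPolynomial (Fin n ⊕ Unit) ℂ}
    (hy : transAction n y p = p) {t : ℂ} (ht : t ≠ 0) :
    (fun i => (y i : ℂ)) ∈ (sliceAt t p).periods := by
  have hneg : -(t • fun i => (y i : ℂ)) ∈ (sliceAt t p).periods := mem_periods.2 fun u => by
    rw [← sub_eq_add_neg, ← eval_sliceAt_transAction, hy]
  simpa [ht] using (sliceAt t p).periods.smul_mem (-t⁻¹) hneg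

/-- the only elements of S(Z ⊕ ℂc) invariant under the translations t_y for
y in a full lattice Y₀ of V′ are the polynomials in c: S(Z ⊕ ℂc)^{Y₀} = ℂ[c]. -/
theorem stmt8 {n : ℕ} (b : Module.Basis (Fin n) ℝ (Fin n → ℝ))
    (Y0 : AddSubgroup (Fin n → ℝ)) (hY0 : Y0 = AddSubgroup.closure (Set.range b))
    (p : MvPolynomial (Fin n ⊕ Unit) ℂ)
    (hp : ∀ y ∈ Y0, transAction n y p = p) :
    p ∈ Algebra.adjoin ℂ ({X (Sum.inr ())} : Set (MvPolynomial (Fin n ⊕ Unit) ℂ)) := by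
  set P : Polynomial ℂ := aeval (Sum.elim 0 fun _ => Polynomial.X) p
  suffices p = Polynomial.aeval (X (Sum.inr ())) P by
    rw [this, Algebra.adjoin_singleton_eq_range_aeval]
    exact ⟨P, rfl⟩
  refine funext_set (fun _ => {0}ᶜ) (fun _ => (Set.finite_singleton 0).infinite_compl)
    fun v hv => ?_
  set t := v (Sum.inr ())
  have hperiods : (sliceAt t p).periods = ⊤ := by
    rw [eq_top_iff, ← span_range_ofReal_basis_eq_top b, Submodule.span_le, Set.range_subset_iff]
    exact fun j => ofReal_mem_periods_sliceAt
      (hp _ (hY0 ▸ AddSubgroup.subset_closure ⟨j, rfl⟩)) (hv (Sum.inr ()) trivial)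
  have hv_z : v ∘ Sum.inl ∈ (sliceAt t p).periods := hperiods ▸ Submodule.mem_top
  calc eval v p = eval (v ∘ Sum.inl) (sliceAt t p) := eval_eq_eval_sliceAt v p
    _ = eval 0 (sliceAt t p) := by
        rw [← zero_add (v ∘ Sum.inl)]
        exact mem_periods.1 hv_z 0
    _ = P.eval t := by
        rw [eval_sliceAt, polynomial_eval_aeval]
        congr 2
        funext j
        rcases j with i | ⟨⟩ <;> simp
    _ = eval v (Polynomial.aeval (X (Sum.inr ())) P) := by
        rw [eval_polynomial_aeval, eval_X]
end

section
/- Let K ⊂ 𝔥̂⁺_reg be a compact set and suppose there exists s > 0 with |(λ̂, a∨) - k_a| ≥ s for all affine roots a and all λ̂ ∈ K. Set D = 1 + (2/s) max_a |k_a|. Then the cocycle values satisfy the operator norm bound ‖J_w(λ̂)‖_M ≤ D^{l(w)} for every w ∈ Ŵ^Y and every λ̂ ∈ ∪_{w∈Ŵ^Y} wK, where ‖·‖_M is the operator norm on a unitary Ŵ^Y-module M. -/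
open Pointwise

/-!
By equivariance of the pairing and invariance of `k`, the separation `s ≤ |(λ̂, a∨) - k_a|` holds
on the whole orbit `⋃ w, w • K`. There each generator satisfies
`‖J_{s_a}(λ̂)‖ ≤ (|(λ̂, a∨)| + |k_a|) / |(λ̂, a∨) - k_a| ≤ 1 + 2 |k_a| / s ≤ D` and `‖J_ω‖ ≤ 1 ≤ D`,
and the cocycle identity makes the norm submultiplicative along a word of length `l(w)`.
-/

section Orbit

variable {G X : Type*} [Group G] [MulAction G X]

theorem smul_mem_iUnion_smul {K : Set X} (w : G) {x : X} (hx : x ∈ ⋃ u : G, u • K) :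
    w • x ∈ ⋃ u : G, u • K := by
  obtain ⟨u, y, hy, rfl⟩ := Set.mem_iUnion.1 hx
  exact Set.mem_iUnion.2 ⟨w * u, y, hy, mul_smul w u y⟩

theorem le_norm_sub_of_mem_iUnion_smul {R E : Type*} [MulAction G R] [SeminormedAddCommGroup E]
    {p : R → X → E} {k : R → E} (hp : ∀ (a : R) (w : G) (x : X), p a (w • x) = p (w⁻¹ • a) x)
    (hk : ∀ (w : G) (a : R), k (w • a) = k a) {K : Set X} {s : ℝ}
    (hsep : ∀ a : R, ∀ x ∈ K, s ≤ ‖p a x - k a‖) (a : R) {x : X}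
    (hx : x ∈ ⋃ u : G, u • K) : s ≤ ‖p a x - k a‖ := by
  obtain ⟨u, y, hy, rfl⟩ := Set.mem_iUnion.1 hx
  rw [hp, ← hk u⁻¹ a]
  exact hsep _ y hy

end Orbit

theorem norm_add_norm_div_norm_sub_le {E : Type*} [SeminormedAddCommGroup E] {z c : E}
    {s kmax : ℝ} (hs : 0 < s) (hsep : s ≤ ‖z - c‖) (hc : ‖c‖ ≤ kmax) :
    (‖z‖ + ‖c‖) / ‖z - c‖ ≤ 1 + 2 / s * kmax := by
  have ht : 0 < ‖z - c‖ := hs.trans_le hsep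
  have hkmax : 0 ≤ kmax := (norm_nonneg c).trans hc
  have hz : ‖z‖ ≤ ‖z - c‖ + ‖c‖ := norm_le_norm_sub_add z c
  calc (‖z‖ + ‖c‖) / ‖z - c‖ ≤ (‖z - c‖ + 2 * ‖c‖) / ‖z - c‖ := by
        gcongr ?_ / _; linarith
    _ = 1 + 2 * ‖c‖ / ‖z - c‖ := by rw [add_div, div_self ht.ne']
    _ ≤ 1 + 2 * kmax / s := by gcongr
    _ = 1 + 2 / s * kmax := by ring

theorem norm_inv_smul_smul_add_smul_one_le {𝕜 A : Type*} [NormedField 𝕜] [SeminormedRing A]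
    [NormedAlgebra 𝕜 A] (h1 : ‖(1 : A)‖ ≤ 1) {T : A} (hT : ‖T‖ ≤ 1) {z c : 𝕜} {s kmax : ℝ}
    (hs : 0 < s) (hsep : s ≤ ‖z - c‖) (hc : ‖c‖ ≤ kmax) :
    ‖(z - c)⁻¹ • (z • T + c • (1 : A))‖ ≤ 1 + 2 / s * kmax := by
  have hnum : ‖z • T + c • (1 : A)‖ ≤ ‖z‖ + ‖c‖ :=
    calc ‖z • T + c • (1 : A)‖ ≤ ‖z‖ * ‖T‖ + ‖c‖ * ‖(1 : A)‖ :=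
          (norm_add_le _ _).trans (add_le_add (norm_smul_le _ _) (norm_smul_le _ _))
      _ ≤ ‖z‖ * 1 + ‖c‖ * 1 := by gcongr
      _ = ‖z‖ + ‖c‖ := by ring
  calc ‖(z - c)⁻¹ • (z • T + c • (1 : A))‖ = ‖z • T + c • (1 : A)‖ / ‖z - c‖ := by
        rw [norm_smul, norm_inv, inv_mul_eq_div]
    _ ≤ (‖z‖ + ‖c‖) / ‖z - c‖ := by gcongr
    _ ≤ 1 + 2 / s * kmax := norm_add_norm_div_norm_sub_le hs hsep hc

theorem norm_cocycle_list_prod_le {G X A : Type*} [Group G] [MulAction G X] [SeminormedRing A]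
    (h1 : ‖(1 : A)‖ ≤ 1) {J : G → X → A} (hJ1 : ∀ x : X, J 1 x = 1)
    (hcoc : ∀ (u w : G) (x : X), J (u * w) x = J u (w • x) * J w x)
    {S : Set X} (hS : ∀ (w : G), ∀ x ∈ S, w • x ∈ S) {T : Set G} {D : ℝ}
    (hgen : ∀ g ∈ T, ∀ x ∈ S, ‖J g x‖ ≤ D) :
    ∀ L : List G, (∀ g ∈ L, g ∈ T) → ∀ x ∈ S, ‖J L.prod x‖ ≤ D ^ L.length
  | [], _, x, _ => by simpa [hJ1] using h1
  | g :: L, hL, x, hx => by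
    have hg : ‖J g (L.prod • x)‖ ≤ D := hgen g (hL g List.mem_cons_self) _ (hS _ x hx)
    have ih := norm_cocycle_list_prod_le h1 hJ1 hcoc hS hgen L
      (fun g' hg' => hL g' (List.mem_cons_of_mem g hg')) x hx
    calc ‖J (g :: L).prod x‖ = ‖J g (L.prod • x) * J L.prod x‖ := by
          rw [List.prod_cons, hcoc]
      _ ≤ ‖J g (L.prod • x)‖ * ‖J L.prod x‖ := norm_mul_le _ _
      _ ≤ D * D ^ L.length := mul_le_mul hg ih (norm_nonneg _) ((norm_nonneg _).trans hg)
      _ = D ^ (g :: L).length := by rw [List.length_cons, pow_succ']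

theorem stmt10_general {X G Raff M : Type*} [Group G] [MulAction G X] [MulAction G Raff]
    [NormedAddCommGroup M] [InnerProductSpace ℂ M]
    (π : G → M →L[ℂ] M)
    (hπ : ∀ w : G, ‖π w‖ ≤ 1)
    (p : Raff → X → ℂ) (hp : ∀ (a : Raff) (w : G) (x : X), p a (w • x) = p (w⁻¹ • a) x)
    (k : Raff → ℂ) (hk : ∀ (w : G) (a : Raff), k (w • a) = k a)
    (kmax : ℝ) (hkmax : ∀ a : Raff, ‖k a‖ ≤ kmax) (hkm0 : 0 ≤ kmax)
    (F : Set Raff) (sr : Raff → G) (Ω : Set G)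
    (J : G → X → M →L[ℂ] M)
    (hJ1 : ∀ x : X, J 1 x = 1)
    (hcoc : ∀ (u w : G) (x : X), J (u * w) x = J u (w • x) * J w x)
    (hJr : ∀ a ∈ F, ∀ x : X,
      J (sr a) x = (p a x - k a)⁻¹ • ((p a x) • π (sr a) + (k a) • (1 : M →L[ℂ] M)))
    (hJΩ : ∀ ω ∈ Ω, ∀ x : X, J ω x = π ω)
    (l : G → ℕ)
    (hl : ∀ w : G, ∃ g : Fin (l w) → G,
      (∀ i, g i ∈ (sr '' F) ∪ Ω) ∧ w = (List.ofFn g).prod)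
    (K : Set X)
    (s : ℝ) (hs : 0 < s)
    (hsep : ∀ a : Raff, ∀ x ∈ K, s ≤ ‖p a x - k a‖)
    (D : ℝ) (hD : D = 1 + (2 / s) * kmax) :
    ∀ w : G, ∀ x ∈ ⋃ u : G, u • K, ‖J w x‖ ≤ D ^ (l w) := by
  have hgen : ∀ g ∈ (sr '' F) ∪ Ω, ∀ x ∈ ⋃ u : G, u • K, ‖J g x‖ ≤ D := by
    rintro g (⟨a, ha, rfl⟩ | hω) x hx
    · rw [hJr a ha x, hD]
      exact norm_inv_smul_smul_add_smul_one_le ContinuousLinearMap.norm_id_le (hπ _) hs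
        (le_norm_sub_of_mem_iUnion_smul hp hk hsep a hx) (hkmax a)
    · rw [hJΩ g hω x, hD]
      exact (hπ g).trans (le_add_of_nonneg_right (by positivity))
  intro w x hx
  obtain ⟨g, hg, hw⟩ := hl w
  calc ‖J w x‖ = ‖J (List.ofFn g).prod x‖ := by rw [← hw]
    _ ≤ D ^ (List.ofFn g).length :=
      norm_cocycle_list_prod_le ContinuousLinearMap.norm_id_le hJ1 hcoc
        (fun u _ => smul_mem_iUnion_smul u) hgen _ (by simpa [List.mem_ofFn] using hg) x hx
    _ = D ^ l w := by rw [List.length_ofFn]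

/-- if |(λ̂,a∨) - k_a| ≥ s > 0 for all affine roots a and λ̂ in a compact
K ⊆ 𝔥̂⁺_reg, and D = 1 + (2/s)·max|k_a|, then ‖J_w(λ̂)‖ ≤ D^{l(w)} for all w ∈ Ŵ^Y and
all λ̂ ∈ ⋃_{w} wK. -/
theorem stmt10 {X G Raff M : Type*} [TopologicalSpace X] [Group G] [MulAction G X] [MulAction G Raff]
    [NormedAddCommGroup M] [InnerProductSpace ℂ M]
    (π : G → M →L[ℂ] M) (hπunitary : ∀ w : G, ∀ m : M, ‖π w m‖ = ‖m‖)
    (hπ : ∀ w : G, ‖π w‖ ≤ 1)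
    (p : Raff → X → ℂ) (hp : ∀ (a : Raff) (w : G) (x : X), p a (w • x) = p (w⁻¹ • a) x)
    (k : Raff → ℂ) (hk : ∀ (w : G) (a : Raff), k (w • a) = k a)
    (kmax : ℝ) (hkmax : ∀ a : Raff, ‖k a‖ ≤ kmax) (hkm0 : 0 ≤ kmax)
    (F : Set Raff) (sr : Raff → G) (Ω : Set G)
    (J : G → X → M →L[ℂ] M)
    (hJ1 : ∀ x : X, J 1 x = 1)
    (hcoc : ∀ (u w : G) (x : X), J (u * w) x = J u (w • x) * J w x)
    (hJr : ∀ a ∈ F, ∀ x : X,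
      J (sr a) x = (p a x - k a)⁻¹ • ((p a x) • π (sr a) + (k a) • (1 : M →L[ℂ] M)))
    (hJΩ : ∀ ω ∈ Ω, ∀ x : X, J ω x = π ω)
    (l : G → ℕ)
    (hl : ∀ w : G, ∃ g : Fin (l w) → G,
      (∀ i, g i ∈ (sr '' F) ∪ Ω) ∧ w = (List.ofFn g).prod)
    (K : Set X) (hK : IsCompact K)
    (s : ℝ) (hs : 0 < s)
    (hsep : ∀ a : Raff, ∀ x ∈ K, s ≤ ‖p a x - k a‖)
    (D : ℝ) (hD : D = 1 + (2 / s) * kmax) :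
    ∀ w : G, ∀ x ∈ ⋃ u : G, u • K, ‖J w x‖ ≤ D ^ (l w) :=
  stmt10_general π hπ p hp k hk kmax hkmax hkm0 F sr Ω J hJ1 hcoc hJr hJΩ l hl K s hs hsep D hD
end

section
/- Fix ξ > 0, Re(κ) > 0. For any compact K ⊂ V, real number D > 1, and λ ∈ 𝔥, v ∈ V, the series Σ_{y ∈ Y} exp(-(ξRe(κ)/2)(y,y) + (Re(κ)v - ξRe(λ), y) + log(D)Σ_{α∈R⁺}|(y,α)|) converges, uniformly for v in K. Consequently the generalized Bethe series E_M(v̂; λ̂) = Σ_{y∈Y} e^{(t_y λ̂, v̂)} J_{t_y}(λ̂) converges absolutely in End(M) whenever ‖J_{t_y}(λ̂)‖ ≤ D^{l(t_y)}. -/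
open scoped RealInnerProductSpace

/-- The lattice point y = Σᵢ mᵢ bᵢ of the full lattice Y spanned by the basis b. -/
noncomputable def latVec {V : Type*} [NormedAddCommGroup V] [InnerProductSpace ℝ V]
    {n : ℕ} (b : Module.Basis (Fin n) ℝ V) (m : Fin n → ℤ) : V :=
  ∑ i, (m i : ℝ) • b i

/-!
Since ξ > 0 and Re κ > 0, the Gaussian factor exp(-(ξ Re κ / 2)(y,y)) beats every term that is
linear in ‖y‖, and both (w, y) and log D · l(t_y) ≤ log D · (Σ_{α∈R⁺} ‖α‖) ‖y‖ are. Completing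
the square, each term is at most a constant times exp(-c Σᵢ mᵢ²) in the coordinates
y = Σᵢ mᵢ bᵢ, and this Gaussian is summable over ℤⁿ as a product of one-dimensional Gaussian
sums. The bound depends on v only through an upper bound for ‖Re κ · v - ξ Re λ‖, hence is
uniform on compact sets (Weierstrass M-test). Finally, |e^{(t_y λ̂, v̂)}| · ‖J_{t_y}(λ̂)‖ is
at most a constant multiple of the term of the first series.
-/

open Real

theorem summable_fin_pi_prod {β : Type*} {n : ℕ} (f : Fin n → β → ℝ) (hf0 : ∀ i x, 0 ≤ f i x)
    (hf : ∀ i, Summable (f i)) : Summable fun x : Fin n → β => ∏ i, f i (x i) := by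
  induction n with
  | zero => exact summable_of_hasFiniteSupport (Set.toFinite _)
  | succ n ih =>
    rw [← (Fin.consEquiv fun _ => β).summable_iff]
    simpa only [Function.comp_def, Fin.consEquiv_apply, Fin.prod_univ_succ, Fin.cons_zero,
      Fin.cons_succ] using (hf 0).mul_of_nonneg (ih (fun i => f i.succ) (fun i => hf0 i.succ)
        fun i => hf i.succ) (hf0 0) fun x => Finset.prod_nonneg fun i _ => hf0 i.succ (x i)

theorem summable_exp_neg_mul_int_sq {a : ℝ} (ha : 0 < a) :
    Summable fun k : ℤ => exp (-a * (k : ℝ) ^ 2) := by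
  have hnat : Summable fun k : ℕ => exp (-a * (k : ℝ) ^ 2) :=
    summable_exp_nat_mul_of_ge (neg_lt_zero.2 ha) fun i => by
      exact_mod_cast Nat.le_self_pow two_ne_zero i
  exact .of_nat_of_neg (by simpa using hnat) (by simpa using hnat)

theorem summable_exp_neg_mul_sum_sq {n : ℕ} {a : ℝ} (ha : 0 < a) :
    Summable fun m : Fin n → ℤ => exp (-a * ∑ i, (m i : ℝ) ^ 2) := by
  simpa only [Finset.mul_sum, exp_sum] using
    summable_fin_pi_prod (fun _ (k : ℤ) => exp (-a * (k : ℝ) ^ 2)) (fun _ _ => (exp_pos _).le)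
      fun _ => summable_exp_neg_mul_int_sq ha

theorem Module.Basis.exists_sum_sq_repr_le {ι V : Type*} [Fintype ι] [NormedAddCommGroup V]
    [NormedSpace ℝ V] [FiniteDimensional ℝ V] (b : Module.Basis ι ℝ V) :
    ∃ K > 0, ∀ x : V, ∑ i, b.repr x i ^ 2 ≤ K * ‖x‖ ^ 2 := by
  set c : ι → V →L[ℝ] ℝ := fun i => LinearMap.toContinuousLinearMap (b.coord i)
  refine ⟨∑ i, ‖c i‖ ^ 2 + 1, by positivity, fun x => ?_⟩
  have hcoord (i : ι) : b.repr x i ^ 2 ≤ ‖c i‖ ^ 2 * ‖x‖ ^ 2 := by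
    rw [← mul_pow, ← sq_abs]
    exact pow_le_pow_left₀ (abs_nonneg _) ((c i).le_opNorm x) 2
  calc ∑ i, b.repr x i ^ 2 ≤ ∑ i, ‖c i‖ ^ 2 * ‖x‖ ^ 2 := Finset.sum_le_sum fun i _ => hcoord i
    _ ≤ (∑ i, ‖c i‖ ^ 2 + 1) * ‖x‖ ^ 2 := by
      rw [← Finset.sum_mul]; nlinarith [sq_nonneg ‖x‖]

theorem summable_exp_neg_mul_norm_sq_add_mul_norm {V : Type*} [NormedAddCommGroup V]
    [NormedSpace ℝ V] {n : ℕ} (b : Module.Basis (Fin n) ℝ V) {a : ℝ} (ha : 0 < a) (C : ℝ) :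
    Summable fun m : Fin n → ℤ =>
      exp (-a * ‖∑ i, (m i : ℝ) • b i‖ ^ 2 + C * ‖∑ i, (m i : ℝ) • b i‖) := by
  have : FiniteDimensional ℝ V := .of_basis b
  obtain ⟨K, hK, hrepr⟩ := b.exists_sum_sq_repr_le
  refine ((summable_exp_neg_mul_sum_sq (n := n) (a := a / (2 * K)) (by positivity)).mul_left
    (exp (C ^ 2 / (2 * a)))).of_nonneg_of_le (fun _ => (exp_pos _).le) fun m => ?_
  set t := ‖∑ i, (m i : ℝ) • b i‖
  have hcoord : ∑ i, (m i : ℝ) ^ 2 ≤ K * t ^ 2 := by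
    simpa only [b.repr_sum_self] using hrepr (∑ i, (m i : ℝ) • b i)
  have hsquare : -a * t ^ 2 + C * t ≤ C ^ 2 / (2 * a) - a / 2 * t ^ 2 := by
    have : 0 ≤ (a * t - C) ^ 2 / (2 * a) := by positivity
    have : (a * t - C) ^ 2 / (2 * a) = a / 2 * t ^ 2 - C * t + C ^ 2 / (2 * a) := by
      field_simp; ring
    linarith
  have hgauss : a / (2 * K) * ∑ i, (m i : ℝ) ^ 2 ≤ a / 2 * t ^ 2 := by
    calc a / (2 * K) * ∑ i, (m i : ℝ) ^ 2 ≤ a / (2 * K) * (K * t ^ 2) := by gcongr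
      _ = a / 2 * t ^ 2 := by field_simp
  rw [← exp_add]
  exact exp_le_exp.2 (by linarith)

section

variable {V : Type*} [NormedAddCommGroup V] [InnerProductSpace ℝ V]

theorem inner_add_mul_sum_abs_inner_le {L R : ℝ} (hL : 0 ≤ L) (Rplus : Finset V) {w : V}
    (hw : ‖w‖ ≤ R) (y : V) :
    ⟪w, y⟫ + L * ∑ α ∈ Rplus, |⟪y, α⟫| ≤ (R + L * ∑ α ∈ Rplus, ‖α‖) * ‖y‖ := by
  have hroots : ∑ α ∈ Rplus, |⟪y, α⟫| ≤ (∑ α ∈ Rplus, ‖α‖) * ‖y‖ := by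
    rw [Finset.sum_mul]
    exact Finset.sum_le_sum fun α _ => (abs_real_inner_le_norm y α).trans_eq (mul_comm _ _)
  have hw' : ⟪w, y⟫ ≤ R * ‖y‖ :=
    (real_inner_le_norm w y).trans (mul_le_mul_of_nonneg_right hw (norm_nonneg y))
  nlinarith [mul_le_mul_of_nonneg_left hroots hL]

theorem exp_bethe_term_le {a L R : ℝ} (hL : 0 ≤ L) (Rplus : Finset V) {w : V} (hw : ‖w‖ ≤ R)
    (y : V) :
    exp (-a * ⟪y, y⟫ + ⟪w, y⟫ + L * ∑ α ∈ Rplus, |⟪y, α⟫|) ≤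
      exp (-a * ‖y‖ ^ 2 + (R + L * ∑ α ∈ Rplus, ‖α‖) * ‖y‖) := by
  rw [real_inner_self_eq_norm_sq, add_assoc]
  exact exp_le_exp.2 (add_le_add_right (inner_add_mul_sum_abs_inner_le hL Rplus hw y) _)

theorem summable_exp_bethe_term {n : ℕ} (b : Module.Basis (Fin n) ℝ V) {a L : ℝ} (ha : 0 < a)
    (hL : 0 ≤ L) (Rplus : Finset V) (w : V) :
    Summable fun m : Fin n → ℤ =>
      exp (-a * ⟪latVec b m, latVec b m⟫ + ⟪w, latVec b m⟫
        + L * ∑ α ∈ Rplus, |⟪latVec b m, α⟫|) :=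
  (summable_exp_neg_mul_norm_sq_add_mul_norm b ha _).of_nonneg_of_le (fun _ => (exp_pos _).le)
    fun m => exp_bethe_term_le hL Rplus le_rfl (latVec b m)

theorem re_bethe_exponent (Λ : V →ₗ[ℝ] ℂ) {lamre : V} (hΛ : ∀ z, (Λ z).re = ⟪lamre, z⟫)
    (ξ u : ℝ) (κ η : ℂ) (v y : V) :
    ((u : ℂ) * κ + (ξ : ℂ) * η + Λ v + κ * ((⟪v, y⟫ : ℝ) : ℂ) - (ξ : ℂ) * Λ y
        - ((ξ : ℂ) * κ / 2) * ((⟪y, y⟫ : ℝ) : ℂ)).re =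
      u * κ.re + ξ * η.re + ⟪lamre, v⟫
        + (-(ξ * κ.re / 2) * ⟪y, y⟫ + ⟪κ.re • v - ξ • lamre, y⟫) := by
  rw [show (ξ : ℂ) * κ / 2 = ((ξ / 2 : ℝ) : ℂ) * κ by push_cast; ring]
  simp only [Complex.add_re, Complex.sub_re, Complex.mul_re, Complex.ofReal_re,
    Complex.ofReal_im, hΛ, inner_sub_left, real_inner_smul_left]
  ring

end

/-- for ξ > 0 and Re(κ) > 0, the series
Σ_{y∈Y} exp(-(ξRe(κ)/2)(y,y) + (Re(κ)v - ξRe(λ), y) + log(D)·Σ_{α∈R⁺}|(y,α)|)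
converges, uniformly for v in any compact K ⊆ V; consequently the generalized Bethe
series Σ_{y∈Y} e^{(t_yλ̂,v̂)} J_{t_y}(λ̂) converges absolutely in End(M) whenever
‖J_{t_y}(λ̂)‖ ≤ D^{l(t_y)}, where l(t_y) = Σ_{α∈R⁺}|(y,α)| and
e^{(t_yλ̂,v̂)} = exp(uκ + ξη + (λ,v) + κ(v,y) - ξ(λ,y) - (ξκ/2)(y,y))
for v̂ = v + uc + ξd and λ̂ = λ + ηc + κd. -/
theorem stmt15 {V : Type*} [NormedAddCommGroup V] [InnerProductSpace ℝ V]
    {n : ℕ} (b : Module.Basis (Fin n) ℝ V) (Rplus : Finset V)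
    (ξ : ℝ) (hξ : 0 < ξ) (κ : ℂ) (hκ : 0 < κ.re)
    (lamre : V) (D : ℝ) (hD : 1 < D)
    (K : Set V) (hK : IsCompact K)
    {M : Type*} [NormedAddCommGroup M] [NormedSpace ℂ M]
    (J : (Fin n → ℤ) → M →L[ℂ] M)
    (hJ : ∀ m : Fin n → ℤ,
      ‖J m‖ ≤ Real.rpow D (∑ α ∈ Rplus, |⟪latVec b m, α⟫|))
    (Λ : V →ₗ[ℝ] ℂ) (hΛ : ∀ z : V, (Λ z).re = ⟪lamre, z⟫) :
    (∀ v : V, Summable (fun m : Fin n → ℤ =>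
      Real.exp (-(ξ * κ.re / 2) * ⟪latVec b m, latVec b m⟫
        + ⟪κ.re • v - ξ • lamre, latVec b m⟫
        + Real.log D * ∑ α ∈ Rplus, |⟪latVec b m, α⟫|))) ∧
    (TendstoUniformlyOn
      (fun (s : Finset (Fin n → ℤ)) (v : V) => ∑ m ∈ s,
        Real.exp (-(ξ * κ.re / 2) * ⟪latVec b m, latVec b m⟫
          + ⟪κ.re • v - ξ • lamre, latVec b m⟫
          + Real.log D * ∑ α ∈ Rplus, |⟪latVec b m, α⟫|))
      (fun v : V => ∑' m : Fin n → ℤ,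
        Real.exp (-(ξ * κ.re / 2) * ⟪latVec b m, latVec b m⟫
          + ⟪κ.re • v - ξ • lamre, latVec b m⟫
          + Real.log D * ∑ α ∈ Rplus, |⟪latVec b m, α⟫|))
      Filter.atTop K) ∧
    (∀ (v : V) (u : ℝ) (η : ℂ), Summable (fun m : Fin n → ℤ =>
      ‖Complex.exp ((u : ℂ) * κ + (ξ : ℂ) * η + Λ v
          + κ * ((⟪v, latVec b m⟫ : ℝ) : ℂ) - (ξ : ℂ) * Λ (latVec b m)
          - ((ξ : ℂ) * κ / 2) * ((⟪latVec b m, latVec b m⟫ : ℝ) : ℂ)) • J m‖)) := by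
  have ha : 0 < ξ * κ.re / 2 := by positivity
  have hL : 0 ≤ log D := (log_pos hD).le
  have hsum (v : V) := summable_exp_bethe_term b ha hL Rplus (κ.re • v - ξ • lamre)
  refine ⟨hsum, ?_, fun v u η => ?_⟩
  · obtain ⟨R, hR⟩ :=
      (hK.image (f := fun v => κ.re • v - ξ • lamre) (by fun_prop)).isBounded.exists_norm_le
    refine tendstoUniformlyOn_tsum
      (summable_exp_neg_mul_norm_sq_add_mul_norm b ha (R + log D * ∑ α ∈ Rplus, ‖α‖))
      fun m v hv => ?_
    rw [norm_of_nonneg (exp_pos _).le]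
    exact exp_bethe_term_le hL Rplus (hR _ (Set.mem_image_of_mem _ hv)) _
  · refine ((hsum v).mul_left (exp (u * κ.re + ξ * η.re + ⟪lamre, v⟫))).of_nonneg_of_le
      (fun _ => norm_nonneg _) fun m => ?_
    have hJm : ‖J m‖ ≤ exp (log D * ∑ α ∈ Rplus, |⟪latVec b m, α⟫|) :=
      (hJ m).trans_eq (rpow_def_of_pos (by linarith) _)
    rw [norm_smul, Complex.norm_exp, re_bethe_exponent Λ hΛ, exp_add, exp_add _ (log D * _),
      ← mul_assoc]
    gcongr
end
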